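/- Let Q be a prime power, r and d positive integers, and β ∈ F_{Q^2} with β^{Q+1} = 1. Then x^{r+d(Q-1)} + β^{-1} x^r permutes F_{Q^2} if and only if gcd(r, Q-1) = 1, gcd(r - d, Q+1) = 1, and (-β)^{(Q+1)/gcd(Q+1, d)} ≠ 1. -/

import Mathlib

/-!
Write `f x = x ^ r * h (x ^ (Q - 1))` with `h u = u ^ d + β⁻¹`. The map `x ↦ x ^ (Q - 1)` sends
`F_{Q²}ˣ` onto the group `μ_{Q+1}` of `(Q + 1)`-st roots of unity, its fibres are cosets of
`μ_{Q-1}`, and it intertwines `f` with `g u = u ^ r * h u ^ (Q - 1)`. Hence (Zieve's criterion) `f`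
permutes `F_{Q²}` iff `gcd(r, Q - 1) = 1`, `h` has no root on `μ_{Q+1}`, and `g` is injective on
`μ_{Q+1}`. On `μ_{Q+1}` the Frobenius `y ↦ y ^ Q` is inversion, so `h u ^ Q = β * u⁻ᵈ * h u`, i.e.
`g u = β * u ^ (r - d)`, which is injective iff `gcd(r - d, Q + 1) = 1`. Finally `h` has a root on
`μ_{Q+1}` iff `-β⁻¹` is a `d`-th power in this cyclic group, i.e. iff
`(-β) ^ ((Q + 1) / gcd(Q + 1, d)) = 1`.
-/

theorem IsCyclic.exists_pow_eq_iff {G : Type*} [CommGroup G] [IsCyclic G] [Finite G] (k : ℕ)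
    (a : G) : (∃ x, x ^ k = a) ↔ a ^ (Nat.card G / (Nat.card G).gcd k) = 1 := by
  set N := Nat.card G
  have hle : (powMonoidHom k : G →* G).range ≤ (powMonoidHom (N / N.gcd k)).ker := by
    rintro _ ⟨x, rfl⟩
    have hk : k * (N / N.gcd k) = N * (k / N.gcd k) := by
      rw [← Nat.mul_div_assoc _ (Nat.gcd_dvd_left N k),
        ← Nat.mul_div_assoc _ (Nat.gcd_dvd_right N k), mul_comm]
    rw [MonoidHom.mem_ker, powMonoidHom_apply, powMonoidHom_apply, ← pow_mul, hk, pow_mul,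
      pow_card_eq_one', one_pow]
  have hcard : Nat.card (powMonoidHom (N / N.gcd k) : G →* G).ker
      ≤ Nat.card (powMonoidHom k : G →* G).range := by
    rw [IsCyclic.card_powMonoidHom_ker, IsCyclic.card_powMonoidHom_range,
      Nat.gcd_eq_right (Nat.div_dvd_of_dvd (Nat.gcd_dvd_left N k))]
  simpa using SetLike.ext_iff.1 (Subgroup.eq_of_le_of_card_ge hle hcard) a

theorem exists_pow_eq_one_and_pow_eq {M : Type*} [Monoid M] {a : M} {m r : ℕ} (ha : a ^ m = 1)
    (hr : r.Coprime m) : ∃ c : M, c ^ m = 1 ∧ c ^ r = a := by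
  obtain ⟨k, hk⟩ :=
    exists_pow_eq_self_of_coprime (hr.coprime_dvd_right (orderOf_dvd_of_pow_eq_one ha))
  refine ⟨a ^ k, ?_, ?_⟩
  · rw [← pow_mul, mul_comm, pow_mul, ha, one_pow]
  · rw [← pow_mul, mul_comm, pow_mul, hk]

theorem eq_one_of_zpow_eq_one_of_gcd_eq_one₀ {G₀ : Type*} [GroupWithZero G₀] {w : G₀}
    (hw : w ≠ 0) {k l : ℤ} (hkl : Int.gcd k l = 1) (hk : w ^ k = 1) (hl : w ^ l = 1) : w = 1 := by
  lift w to G₀ˣ using hw.isUnit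
  rw [← Units.val_zpow_eq_zpow_val, Units.val_eq_one] at hk hl
  simpa [hkl] using pow_intGCD_eq_one.2 ⟨hk, hl⟩

theorem add_pow_sub_one_of_pow_succ_eq_one {K : Type*} [Field K] (p : ℕ) [ExpChar K p] (e : ℕ)
    {a b : K} (ha : a ^ (p ^ e + 1) = 1) (hb : b ^ (p ^ e + 1) = 1) (hab : a + b ≠ 0) :
    (a + b) ^ (p ^ e - 1) = (a * b)⁻¹ := by
  have hpow : ∀ x : K, x ^ (p ^ e + 1) = 1 → x ^ p ^ e = x⁻¹ := fun x hx =>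
    eq_inv_of_mul_eq_one_left (by rwa [← pow_succ])
  have ha0 : a ≠ 0 := (IsUnit.of_pow_eq_one ha (Nat.succ_ne_zero _)).ne_zero
  have hb0 : b ≠ 0 := (IsUnit.of_pow_eq_one hb (Nat.succ_ne_zero _)).ne_zero
  have hfrob : (a + b) ^ p ^ e = (a + b) * (a * b)⁻¹ := by
    rw [add_pow_expChar_pow, hpow a ha, hpow b hb]
    field_simp
    ring
  rw [pow_sub₀ _ hab (Nat.one_le_pow _ _ (expChar_pos K p)), pow_one, hfrob,
    mul_right_comm, mul_inv_cancel₀ hab, one_mul]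

theorem pow_mul_pow_add_inv_pow_sub_one {K : Type*} [Field K] (p : ℕ) [ExpChar K p] (e r d : ℕ)
    {β u : K} (hβ : β ^ (p ^ e + 1) = 1) (hu : u ^ (p ^ e + 1) = 1) (hne : u ^ d + β⁻¹ ≠ 0) :
    u ^ r * (u ^ d + β⁻¹) ^ (p ^ e - 1) = β * u ^ ((r : ℤ) - d) := by
  have hu0 : u ≠ 0 := (IsUnit.of_pow_eq_one hu (Nat.succ_ne_zero _)).ne_zero
  have hud : (u ^ d) ^ (p ^ e + 1) = 1 := by rw [← pow_mul, mul_comm, pow_mul, hu, one_pow]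
  have hβinv : β⁻¹ ^ (p ^ e + 1) = 1 := by rw [inv_pow, hβ, inv_one]
  rw [add_pow_sub_one_of_pow_succ_eq_one p e hud hβinv hne, zpow_sub₀ hu0, zpow_natCast,
    zpow_natCast]
  field_simp

namespace FiniteField

variable {F : Type*} [Field F] [Fintype F] {m n : ℕ}

theorem exists_pow_eq_of_pow_div_gcd_eq_one {a : F} {k : ℕ}
    (ha : a ^ ((Fintype.card F - 1) / (Fintype.card F - 1).gcd k) = 1) :
    ∃ x : F, x ≠ 0 ∧ x ^ k = a := by
  have hq : 0 < Fintype.card F - 1 := Nat.sub_pos_of_lt Fintype.one_lt_card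
  have hN : (Fintype.card F - 1) / (Fintype.card F - 1).gcd k ≠ 0 :=
    (Nat.div_pos (Nat.gcd_le_left k hq) (Nat.gcd_pos_of_pos_left k hq)).ne'
  lift a to Fˣ using IsUnit.of_pow_eq_one ha hN
  obtain ⟨x, rfl⟩ := (IsCyclic.exists_pow_eq_iff k a).2 <| by
    rw [Nat.card_units, Nat.card_eq_fintype_card, ← Units.val_eq_one]
    exact_mod_cast ha
  exact ⟨x, x.ne_zero, by push_cast; rfl⟩

theorem injOn_zpow_iff (hn : n ∣ Fintype.card F - 1) (k : ℤ) :
    Set.InjOn (fun u : F => u ^ k) {u | u ^ n = 1} ↔ Int.gcd k n = 1 := by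
  have hn0 : n ≠ 0 := by
    rintro rfl
    exact (Nat.sub_pos_of_lt Fintype.one_lt_card).ne' (Nat.eq_zero_of_zero_dvd hn)
  constructor
  · intro hinj
    by_contra hgcd
    obtain ⟨q, hq, hqk⟩ := Nat.exists_prime_and_dvd hgcd
    have : Fact q.Prime := ⟨hq⟩
    have hqk' : (q : ℤ) ∣ Int.gcd k n := Int.natCast_dvd_natCast.2 hqk
    have hqn : q ∣ n := Int.natCast_dvd_natCast.1 (hqk'.trans (Int.gcd_dvd_right _ _))
    obtain ⟨ζ, hζ⟩ := exists_prime_orderOf_dvd_card' (G := Fˣ) q <| by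
      rw [Nat.card_units, Nat.card_eq_fintype_card]; exact hqn.trans hn
    rw [← orderOf_units] at hζ
    obtain ⟨j, hj⟩ := hqk'.trans (Int.gcd_dvd_left k n)
    have hζq : (ζ : F) ^ q = 1 := hζ ▸ pow_orderOf_eq_one _
    have hζ1 : (ζ : F) ≠ 1 := fun h => hq.one_lt.ne' (by rw [← hζ, h, orderOf_one])
    refine hζ1 (hinj (orderOf_dvd_iff_pow_eq_one.1 (hζ ▸ hqn)) (one_pow n) ?_)
    simp only [hj, zpow_mul, zpow_natCast, hζq, one_pow, one_zpow]
  · intro hgcd u hu v hv huv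
    have hu0 : u ≠ 0 := fun h => by simp [h, hn0] at hu
    have hv0 : v ≠ 0 := fun h => by simp [h, hn0] at hv
    rw [← div_eq_one_iff_eq hv0]
    refine eq_one_of_zpow_eq_one_of_gcd_eq_one₀ (div_ne_zero hu0 hv0) hgcd ?_ ?_
    · rw [div_zpow, div_eq_one_iff_eq (zpow_ne_zero _ hv0)]; exact huv
    · rw [zpow_natCast, div_pow, hu.out, hv.out, div_one]

theorem ne_zero_of_card_eq_mul_add_one (hcard : Fintype.card F = m * n + 1) : m ≠ 0 := by
  rintro rfl
  exact Fintype.one_lt_card.ne' (by simpa using hcard)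

theorem pow_pow_eq_one (hcard : Fintype.card F = m * n + 1) {x : F} (hx : x ≠ 0) :
    (x ^ m) ^ n = 1 := by
  rw [← pow_mul, ← Nat.add_sub_cancel (m * n) 1, ← hcard]
  exact pow_card_sub_one_eq_one x hx

theorem exists_pow_eq_of_pow_eq_one (hcard : Fintype.card F = m * n + 1) {u : F}
    (hu : u ^ n = 1) : ∃ x : F, x ≠ 0 ∧ x ^ m = u := by
  refine exists_pow_eq_of_pow_div_gcd_eq_one ?_
  rwa [hcard, Nat.add_sub_cancel, Nat.gcd_mul_right_left,
    Nat.mul_div_cancel_left _ (Nat.pos_of_ne_zero (ne_zero_of_card_eq_mul_add_one hcard))]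

theorem exists_pow_eq_one_pow_eq_iff (hcard : Fintype.card F = m * n + 1) (d : ℕ) {c : F} :
    (∃ u : F, u ^ n = 1 ∧ u ^ d = c) ↔ c ^ (n / n.gcd d) = 1 := by
  constructor
  · rintro ⟨u, hu, rfl⟩
    rw [← pow_mul, ← Nat.mul_div_assoc _ (Nat.gcd_dvd_left n d), mul_comm,
      Nat.mul_div_assoc _ (Nat.gcd_dvd_right n d), pow_mul, hu, one_pow]
  · intro hc
    have hm := Nat.pos_of_ne_zero (ne_zero_of_card_eq_mul_add_one hcard)
    obtain ⟨x, hx, rfl⟩ := exists_pow_eq_of_pow_div_gcd_eq_one (F := F) (k := m * d) <| by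
      rwa [hcard, Nat.add_sub_cancel, Nat.gcd_mul_left, Nat.mul_div_mul_left _ _ hm]
    exact ⟨x ^ m, pow_pow_eq_one hcard hx, by rw [pow_mul]⟩

theorem coprime_iff_injOn_pow (hcard : Fintype.card F = m * n + 1) (r : ℕ) :
    r.Coprime m ↔ Set.InjOn (fun u : F => u ^ r) {u | u ^ m = 1} := by
  have hm : m ∣ Fintype.card F - 1 := by
    rw [hcard, Nat.add_sub_cancel]; exact dvd_mul_right m n
  rw [Nat.coprime_iff_gcd_eq_one, ← Int.gcd_natCast_natCast, ← injOn_zpow_iff hm]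
  simp only [zpow_natCast]

variable {r : ℕ} {h : F → F}

theorem injective_pow_mul_comp_pow (hcard : Fintype.card F = m * n + 1) (hr0 : r ≠ 0)
    (hr : r.Coprime m) (hzero : ∀ u : F, u ^ n = 1 → h u ≠ 0)
    (hg : Set.InjOn (fun u => u ^ r * h u ^ m) {u | u ^ n = 1}) :
    Function.Injective (fun x => x ^ r * h (x ^ m)) := by
  have hf0 : ∀ x : F, x ^ r * h (x ^ m) = 0 ↔ x = 0 := fun x =>
    ⟨not_imp_not.1 fun hx => mul_ne_zero (pow_ne_zero r hx) (hzero _ (pow_pow_eq_one hcard hx)),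
      fun hx => by rw [hx, zero_pow hr0, zero_mul]⟩
  intro x y hxy
  simp only at hxy
  have hxy0 : x = 0 ↔ y = 0 := by rw [← hf0 x, ← hf0 y, hxy]
  by_cases hx : x = 0
  · rw [hx, hxy0.1 hx]
  have hy : y ≠ 0 := hxy0.not.1 hx
  have hxym : x ^ m = y ^ m := hg (pow_pow_eq_one hcard hx) (pow_pow_eq_one hcard hy) <| by
    convert congrArg (· ^ m) hxy using 1 <;> ring
  have hxyr : x ^ r = y ^ r := by
    rw [hxym] at hxy
    exact mul_right_cancel₀ (hzero _ (pow_pow_eq_one hcard hy)) hxy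
  rw [← div_eq_one_iff_eq hy]
  refine (coprime_iff_injOn_pow hcard r).1 hr ?_ (one_pow m) ?_
  · show (x / y) ^ m = 1
    rw [div_pow, hxym, div_self (pow_ne_zero m hy)]
  · show (x / y) ^ r = 1 ^ r
    rw [div_pow, hxyr, div_self (pow_ne_zero r hy), one_pow]

theorem bijective_pow_mul_comp_pow_iff (hcard : Fintype.card F = m * n + 1) (hr : r ≠ 0) :
    Function.Bijective (fun x => x ^ r * h (x ^ m)) ↔
      r.Coprime m ∧ (∀ u : F, u ^ n = 1 → h u ≠ 0) ∧
        Set.InjOn (fun u => u ^ r * h u ^ m) {u | u ^ n = 1} := by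
  set f := fun x : F => x ^ r * h (x ^ m)
  rw [← Finite.injective_iff_bijective]
  refine ⟨fun hf => ?_, fun ⟨hcop, hzero, hg⟩ => injective_pow_mul_comp_pow hcard hr hcop hzero hg⟩
  have hzero : ∀ u : F, u ^ n = 1 → h u ≠ 0 := by
    intro u hu hu0
    obtain ⟨x, hx, rfl⟩ := exists_pow_eq_of_pow_eq_one hcard hu
    exact hx (hf (by simp [f, hu0, hr]))
  have hcop : r.Coprime m := (coprime_iff_injOn_pow hcard r).2 fun u hu v hv huv => hf <| by
    simp only [f, hu.out, hv.out]
    exact congrArg (· * h 1) huv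
  refine ⟨hcop, hzero, ?_⟩
  rintro u hu v hv huv
  obtain ⟨x, hx, rfl⟩ := exists_pow_eq_of_pow_eq_one hcard hu
  obtain ⟨y, hy, rfl⟩ := exists_pow_eq_of_pow_eq_one hcard hv
  have hfy : f y ≠ 0 := mul_ne_zero (pow_ne_zero r hy) (hzero _ hv)
  have hfxy : (f x / f y) ^ m = 1 := by
    rw [div_pow, div_eq_one_iff_eq (pow_ne_zero m hfy)]
    convert huv using 1 <;> simp only [f] <;> ring
  -- `f (c * y) = c ^ r * f y` for `c ^ m = 1`, so `f` hits `f x` on the fibre of `y`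
  obtain ⟨c, hc, hcr⟩ := exists_pow_eq_one_and_pow_eq hfxy hcop
  have hxy : x = c * y := hf <| by
    show f x = (c * y) ^ r * h ((c * y) ^ m)
    rw [mul_pow, mul_pow, hc, one_mul, mul_assoc, hcr]
    exact (div_mul_cancel₀ _ hfy).symm
  rw [hxy, mul_pow, hc, one_mul]

theorem forall_pow_add_inv_ne_zero_iff (hcard : Fintype.card F = m * n + 1) (d : ℕ) (b : F) :
    (∀ u : F, u ^ n = 1 → u ^ d + b⁻¹ ≠ 0) ↔ (-b) ^ (n / n.gcd d) ≠ 1 := by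
  rw [← not_iff_not, not_not, ← inv_eq_one, ← inv_pow, ← neg_inv,
    ← exists_pow_eq_one_pow_eq_iff hcard]
  push Not
  simp only [add_eq_zero_iff_eq_neg]

theorem injOn_pow_mul_pow_add_inv_pow_sub_one_iff (p : ℕ) [ExpChar F p] (e r d : ℕ)
    (hcard : Fintype.card F = (p ^ e - 1) * (p ^ e + 1) + 1) {β : F}
    (hβ : β ^ (p ^ e + 1) = 1) (hne : ∀ u : F, u ^ (p ^ e + 1) = 1 → u ^ d + β⁻¹ ≠ 0) :
    Set.InjOn (fun u => u ^ r * (u ^ d + β⁻¹) ^ (p ^ e - 1)) {u | u ^ (p ^ e + 1) = 1} ↔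
      Int.gcd ((r : ℤ) - d) ((p ^ e : ℕ) + 1) = 1 := by
  have hβ0 : β ≠ 0 := (IsUnit.of_pow_eq_one hβ (Nat.succ_ne_zero _)).ne_zero
  have hn : p ^ e + 1 ∣ Fintype.card F - 1 := by
    rw [hcard, Nat.add_sub_cancel]; exact dvd_mul_left _ _
  have heq : Set.EqOn (fun u => u ^ r * (u ^ d + β⁻¹) ^ (p ^ e - 1))
      (fun u => β * u ^ ((r : ℤ) - d)) {u | u ^ (p ^ e + 1) = 1} := fun u hu =>
    pow_mul_pow_add_inv_pow_sub_one p e r d hβ hu (hne u hu)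
  rw [heq.injOn_iff, show ((p ^ e : ℕ) : ℤ) + 1 = ((p ^ e + 1 : ℕ) : ℤ) by push_cast; ring,
    ← injOn_zpow_iff hn]
  exact ⟨Set.InjOn.of_comp, (mul_right_injective₀ hβ0).comp_injOn⟩

end FiniteField

theorem stmt_16_general (p e Q : ℕ) (hp : p.Prime) (hQ : Q = p ^ e)
    (F : Type*) [Field F] [Fintype F] (hF : Fintype.card F = Q ^ 2)
    (r d : ℕ) (hr : 0 < r)
    (β : F) (hβ : β ^ (Q + 1) = 1) :
    Function.Bijective (fun x : F => x ^ (r + d * (Q - 1)) + β⁻¹ * x ^ r) ↔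
      (Nat.gcd r (Q - 1) = 1 ∧ Int.gcd ((r : ℤ) - d) ((Q : ℤ) + 1) = 1 ∧
        (-β) ^ ((Q + 1) / Nat.gcd (Q + 1) d) ≠ 1) := by
  subst hQ
  have : Fact p.Prime := ⟨hp⟩
  have : CharP F p := charP_of_card_eq_prime_pow (f := e * 2) (by rw [hF, pow_mul])
  have hcard : Fintype.card F = (p ^ e - 1) * (p ^ e + 1) + 1 := by
    rw [hF]; zify [Nat.one_le_pow e p hp.pos]; ring
  have hf : (fun x : F => x ^ (r + d * (p ^ e - 1)) + β⁻¹ * x ^ r) =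
      fun x => x ^ r * (fun u => u ^ d + β⁻¹) (x ^ (p ^ e - 1)) := by
    funext x; ring
  rw [hf, FiniteField.bijective_pow_mul_comp_pow_iff (h := fun u => u ^ d + β⁻¹) hcard hr.ne',
    Nat.coprime_iff_gcd_eq_one, ← FiniteField.forall_pow_add_inv_ne_zero_iff hcard]
  have hg := FiniteField.injOn_pow_mul_pow_add_inv_pow_sub_one_iff p e r d hcard hβ
  exact ⟨fun ⟨h1, h2, h3⟩ => ⟨h1, (hg h2).1 h3, h2⟩, fun ⟨h1, h2, h3⟩ => ⟨h1, h3, (hg h3).2 h2⟩⟩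

theorem stmt_16 (p e Q : ℕ) (hp : p.Prime) (he : 0 < e) (hQ : Q = p ^ e)
    (F : Type*) [Field F] [Fintype F] (hF : Fintype.card F = Q ^ 2)
    (r d : ℕ) (hr : 0 < r) (hd : 0 < d)
    (β : F) (hβ : β ^ (Q + 1) = 1) :
    Function.Bijective (fun x : F => x ^ (r + d * (Q - 1)) + β⁻¹ * x ^ r) ↔
      (Nat.gcd r (Q - 1) = 1 ∧ Int.gcd ((r : ℤ) - d) ((Q : ℤ) + 1) = 1 ∧
        (-β) ^ ((Q + 1) / Nat.gcd (Q + 1) d) ≠ 1) :=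
  stmt_16_general p e Q hp hQ F hF r d hr β hβ
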